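/- arXiv:2605.17492 — 4 statements merged into one kernel-verified Lean document; each statement's English description precedes it below -/
import Mathlib

section
/- A signed graph G (a graph whose edges are labeled + or -) that is connected is balanced (i.e., its vertex set admits a partition V = V1 ∪ V2 such that every positive edge joins vertices in the same part and every negative edge joins vertices in different parts) if and only if G contains no cycle with an odd number of negative edges. -/
open SimpleGraph Finset

variable {V : Type*}

/-- A signed graph `(G, σ)` (with `σ e = true` meaning the edge `e` is positive)
has no negative cycle: no cycle has an odd number of negative edges. -/
def NoNegCycle (G : SimpleGraph V) (σ : Sym2 V → Bool) : Prop :=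
  ∀ (u : V) (w : G.Walk u u), w.IsCycle →
    ¬ Odd ((w.edges.filter fun e => σ e = false).length)

private def negc {G : SimpleGraph V} (σ : Sym2 V → Bool) {u v : V} (w : G.Walk u v) : ℕ :=
  (w.edges.filter fun e => σ e = false).length

private lemma negc_nil {G : SimpleGraph V} (σ : Sym2 V → Bool) {u : V} :
    negc σ (Walk.nil : G.Walk u u) = 0 := rfl

private lemma negc_cons {G : SimpleGraph V} (σ : Sym2 V → Bool) {u a v : V}
    (h : G.Adj u a) (p : G.Walk a v) :
    negc σ (Walk.cons h p) = (if σ s(u, a) = false then 1 else 0) + negc σ p := by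
  simp only [negc, Walk.edges_cons, List.filter_cons]
  split <;> simp_all <;> omega

private lemma negc_append {G : SimpleGraph V} (σ : Sym2 V → Bool) {u v w : V}
    (p : G.Walk u v) (q : G.Walk v w) :
    negc σ (p.append q) = negc σ p + negc σ q := by
  simp [negc, Walk.edges_append, List.filter_append]

private lemma negc_reverse {G : SimpleGraph V} (σ : Sym2 V → Bool) {u v : V}
    (p : G.Walk u v) : negc σ p.reverse = negc σ p := by
  simp [negc, Walk.edges_reverse, List.filter_reverse]

private lemma even_negc_closed {G : SimpleGraph V} {σ : Sym2 V → Bool}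
    (hnc : NoNegCycle G σ) :
    ∀ (n : ℕ) (u : V) (w : G.Walk u u), w.length ≤ n → Even (negc σ w) := by
  classical
  intro n
  induction n using Nat.strong_induction_on with
  | _ n IH =>
  intro u w hw
  cases w with
  | nil => simp [negc_nil]
  | @cons _ a _ h p =>
    by_cases hp : p.IsPath
    · by_cases he : s(u, a) ∈ p.edges
      · -- the edge back to u is in the path: then p = cons (a~u) q with q closed at u
        cases p with
        | nil => simp at he
        | @cons _ b _ h2 q =>
          rw [Walk.edges_cons, List.mem_cons] at he
          rcases he with he | he
          · -- s(u,a) = s(a,b), so b = u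
            have hb : u = b := by
              rw [Sym2.eq_iff] at he
              rcases he with ⟨h1, _⟩ | ⟨h1, _⟩
              · exact absurd h1 h.ne
              · exact h1
            subst hb
            have hq : Even (negc σ q) := by
              refine IH q.length ?_ u q le_rfl
              simp only [Walk.length_cons] at hw
              omega
            obtain ⟨t, ht⟩ := hq
            rw [negc_cons, negc_cons, Sym2.eq_swap (a := a) (b := u)]
            refine ⟨(if σ s(u, a) = false then 1 else 0) + t, by omega⟩
          · -- impossible: a would repeat in the path
            have ha : a ∈ q.support := q.snd_mem_support_of_mem_edges he
            rw [Walk.cons_isPath_iff] at hp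
            exact absurd ha hp.2
      · have hc : (Walk.cons h p).IsCycle := (Walk.cons_isCycle_iff p h).mpr ⟨hp, he⟩
        have := hnc u _ hc
        exact Nat.not_odd_iff_even.mp this
    · -- p has a repeated vertex x; split off a closed subwalk
      rw [Walk.isPath_def] at hp
      obtain ⟨x, hdup⟩ := List.exists_duplicate_iff_not_nodup.mpr hp
      have hx : x ∈ p.support := hdup.mem
      have hcount : 2 ≤ p.support.count x := List.duplicate_iff_two_le_count.mp hdup
      set p1 := p.takeUntil x hx with hp1
      set p2 := p.dropUntil x hx with hp2
      have hspec : p1.append p2 = p := p.take_spec hx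
      have hcount1 : p1.support.count x = 1 := p.count_support_takeUntil_eq_one hx
      have hxt : x ∈ p2.support.tail := by
        by_contra hxt
        have : p.support.count x = 1 := by
          rw [← hspec, Walk.support_append, List.count_append, hcount1,
            List.count_eq_zero_of_not_mem hxt]
        omega
      cases hp2' : p2 with
      | nil => rw [hp2'] at hxt; simp at hxt
      | @cons _ c _ h3 r =>
        rw [hp2'] at hxt
        simp only [Walk.support_cons, List.tail_cons] at hxt
        set rt := r.takeUntil x hxt with hrt
        set rd := r.dropUntil x hxt with hrd
        have hrspec : rt.append rd = r := r.take_spec hxt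
        -- lengths
        have hlen : p1.length + (1 + (rt.length + rd.length)) = p.length := by
          have e1 := congrArg Walk.length hspec
          rw [Walk.length_append, hp2', Walk.length_cons] at e1
          have e2 := congrArg Walk.length hrspec
          rw [Walk.length_append] at e2
          omega
        have hwlen : (Walk.cons h p).length = p.length + 1 := Walk.length_cons _ _
        -- negc decomposition
        have hnp : negc σ p = negc σ p1 + ((if σ s(x, c) = false then 1 else 0)
            + (negc σ rt + negc σ rd)) := by
          conv_lhs => rw [← hspec]
          rw [negc_append, hp2', negc_cons]
          conv_lhs => rw [← hrspec]
          rw [negc_append]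
        have h1 : Even (negc σ (Walk.cons h (p1.append rd))) := by
          refine IH (Walk.cons h (p1.append rd)).length ?_ u _ le_rfl
          rw [Walk.length_cons, Walk.length_append]
          omega
        have h2 : Even (negc σ (Walk.cons h3 rt)) := by
          refine IH (Walk.cons h3 rt).length ?_ x _ le_rfl
          rw [Walk.length_cons]
          omega
        rw [negc_cons, negc_append] at h1
        rw [negc_cons] at h2
        rw [negc_cons, hnp]
        obtain ⟨s1, hs1⟩ := h1
        obtain ⟨s2, hs2⟩ := h2
        exact ⟨s1 + s2, by omega⟩

private lemma parity_walk {G : SimpleGraph V} {σ : Sym2 V → Bool} (f : V → Bool)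
    (hf : ∀ u v, G.Adj u v → ((f u = f v) ↔ σ s(u, v) = true)) :
    ∀ {u v : V} (w : G.Walk u v), (f u = f v) ↔ Even (negc σ w) := by
  intro u v w
  induction w with
  | nil => simp [negc_nil]
  | @cons u a v h p ih =>
    rw [negc_cons]
    have h1 := hf _ _ h
    cases hσ : σ s(u, a) with
    | true =>
      norm_num
      rw [← ih, (h1.mpr hσ : f u = f a)]
    | false =>
      have hne : f u ≠ f a := fun hh => by
        have := h1.mp hh; rw [hσ] at this; exact absurd this (by simp)
      norm_num
      rw [Nat.add_comm, Nat.even_add_one, ← ih]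
      cases hfu : f u <;> cases hfa : f a <;> cases hfv : f v <;> simp_all

/-- A connected finite signed graph is balanced (its vertex set admits a two-part
partition with positive edges inside parts and negative edges between parts)
iff it contains no cycle with an odd number of negative edges. -/
theorem stmt0 [Fintype V] (G : SimpleGraph V) (σ : Sym2 V → Bool)
    (hconn : G.Connected) :
    (∃ f : V → Bool, ∀ u v, G.Adj u v → ((f u = f v) ↔ σ s(u, v) = true)) ↔
      NoNegCycle G σ := by
  classical
  constructor
  · rintro ⟨f, hf⟩ u w hw hodd
    have := (parity_walk f hf w).mp rfl
    exact (Nat.not_odd_iff_even.mpr this) hodd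
  · intro hnc
    obtain ⟨r⟩ := hconn.nonempty
    have hreach : ∀ v, G.Reachable r v := fun v => hconn.preconnected r v
    let p : ∀ v, G.Walk r v := fun v => (hreach v).some
    refine ⟨fun v => decide (Even (negc σ (p v))), ?_⟩
    intro u v huv
    have hclosed : Even (negc σ ((p u).append (Walk.cons huv (p v).reverse))) :=
      even_negc_closed hnc _ r _ le_rfl
    rw [negc_append, negc_cons, negc_reverse] at hclosed
    rw [decide_eq_decide]
    rw [Nat.even_iff] at hclosed ⊢
    rw [Nat.even_iff]
    cases hσ : σ s(u, v) with
    | true => rw [hσ, if_neg (by simp)] at hclosed; simp; omega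
    | false => rw [hσ, if_pos rfl] at hclosed; simp; omega
end

section
/- Let G be an uncertain signed graph where each edge e exists independently with probability p_e, and let e = (u,v) be a bridge of G separating G into components G1 (containing u) and G2 (containing v) with disjoint vertex sets. Then the balance rate of G equals the product of the balance rates of G1 and G2, i.e., R_bal(G) = R_bal(G1) · R_bal(G2). -/
open SimpleGraph Finset

variable {V : Type*}

/- The edge set of `G` as a `Finset`. -/
open scoped Classical in
noncomputable def edgeFS [Fintype V] (G : SimpleGraph V) : Finset (Sym2 V) :=
  Finset.univ.filter (· ∈ G.edgeSet)

/- The balance rate of an uncertain signed graph: the probability, when each edge `e`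
exists independently with probability `p e`, that the realized signed graph is balanced
(contains no negative cycle). -/
open scoped Classical in
noncomputable def Rbal [Fintype V] (G : SimpleGraph V) (σ : Sym2 V → Bool)
    (p : Sym2 V → ℝ) : ℝ :=
  ∑ S ∈ (edgeFS G).powerset,
    ((∏ e ∈ S, p e) * ∏ e ∈ edgeFS G \ S, (1 - p e)) *
      (if NoNegCycle (SimpleGraph.fromEdgeSet (↑S : Set (Sym2 V))) σ then 1 else 0)

/-- The subgraph of `G` induced on a vertex set `A` (kept on the same vertex type). -/
def restrictTo (G : SimpleGraph V) (A : Set V) : SimpleGraph V where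
  Adj x y := G.Adj x y ∧ x ∈ A ∧ y ∈ A
  symm := ⟨fun _ _ h => ⟨h.1.symm, h.2.2, h.2.1⟩⟩
  loopless := ⟨fun x h => G.loopless.irrefl x h.1⟩

/-! A cycle never passes through a bridge, and every other edge lies on one side of the cut, so a
realization is balanced iff its parts on the two sides are. Hence the balance indicator is a
product of a function of the edges inside `A` and a function of the edges inside `Aᶜ`, and since
edges are realized independently, its expectation is the product of the two expectations. -/

section RandomSubset

variable {α R : Type*} [DecidableEq α] [CommRing R]

/-- The paper's `Pr(g)`: the probability that the random subset of `E` is exactly `S`. -/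
def subsetWeight (p : α → R) (E S : Finset α) : R :=
  (∏ e ∈ S, p e) * ∏ e ∈ E \ S, (1 - p e)

def subsetExpect (p : α → R) (E : Finset α) (f : Finset α → R) : R :=
  ∑ S ∈ E.powerset, subsetWeight p E S * f S

theorem subsetExpect_one (p : α → R) (E : Finset α) : subsetExpect p E (fun _ => 1) = 1 := by
  simp only [subsetExpect, subsetWeight, mul_one, ← Finset.prod_add, add_sub_cancel,
    Finset.prod_const_one]

theorem sum_powerset_union_mul {s t : Finset α} (hst : Disjoint s t) (f g : Finset α → R) :
    ∑ S ∈ (s ∪ t).powerset, f (S ∩ s) * g (S ∩ t) =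
      (∑ S ∈ s.powerset, f S) * ∑ S ∈ t.powerset, g S := by
  rw [Finset.sum_mul_sum, ← Finset.sum_product']
  refine Finset.sum_nbij' (fun S => (S ∩ s, S ∩ t)) (fun P => P.1 ∪ P.2) ?_ ?_ ?_ ?_
    (fun _ _ => rfl)
  · intro S _
    simp
  · intro P hP
    simp only [Finset.mem_product, Finset.mem_powerset] at hP ⊢
    exact Finset.union_subset_union hP.1 hP.2
  · intro S hS
    rw [Finset.mem_powerset] at hS
    simp only [← Finset.inter_union_distrib_left, Finset.inter_eq_left.mpr hS]
  · rintro ⟨P₁, P₂⟩ hP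
    simp only [Finset.mem_product, Finset.mem_powerset] at hP
    simp only [Finset.union_inter_distrib_right, Finset.inter_eq_left.mpr hP.1,
      Finset.inter_eq_left.mpr hP.2, Finset.disjoint_iff_inter_eq_empty.mp (hst.mono_left hP.1),
      Finset.disjoint_iff_inter_eq_empty.mp (hst.symm.mono_left hP.2), Finset.union_empty,
      Finset.empty_union]

theorem subsetWeight_union {s t S : Finset α} (hst : Disjoint s t) (hS : S ⊆ s ∪ t)
    (p : α → R) :
    subsetWeight p (s ∪ t) S = subsetWeight p s (S ∩ s) * subsetWeight p t (S ∩ t) := by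
  have hSsplit : S = S ∩ s ∪ S ∩ t := by
    rw [← Finset.inter_union_distrib_left, Finset.inter_eq_left.mpr hS]
  have hcompl : (s ∪ t) \ S = s \ (S ∩ s) ∪ t \ (S ∩ t) := by
    ext; simp only [Finset.mem_sdiff, Finset.mem_union, Finset.mem_inter]; tauto
  unfold subsetWeight
  rw [hcompl, Finset.prod_union (hst.mono Finset.sdiff_subset Finset.sdiff_subset),
    hSsplit, Finset.prod_union (hst.mono Finset.inter_subset_right Finset.inter_subset_right)]
  simp only [← hSsplit]
  ring

theorem subsetExpect_union_mul {s t : Finset α} (hst : Disjoint s t) (p : α → R)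
    (f g : Finset α → R) :
    subsetExpect p (s ∪ t) (fun S => f (S ∩ s) * g (S ∩ t)) =
      subsetExpect p s f * subsetExpect p t g := by
  unfold subsetExpect
  rw [← sum_powerset_union_mul hst]
  refine Finset.sum_congr rfl fun S hS => ?_
  rw [subsetWeight_union hst (Finset.mem_powerset.mp hS)]
  ring

end RandomSubset

section Balance

variable {G H : SimpleGraph V} {σ : Sym2 V → Bool}

theorem restrictTo_adj {A : Set V} {x y : V} :
    (restrictTo G A).Adj x y ↔ G.Adj x y ∧ x ∈ A ∧ y ∈ A :=
  Iff.rfl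

theorem restrictTo_le (G : SimpleGraph V) (A : Set V) : restrictTo G A ≤ G :=
  fun _ _ h => h.1

theorem restrictTo_mono (hHG : H ≤ G) (A : Set V) : restrictTo H A ≤ restrictTo G A :=
  fun _ _ h => ⟨hHG h.1, h.2⟩

theorem NoNegCycle.anti (hHG : H ≤ G) (h : NoNegCycle G σ) : NoNegCycle H σ := by
  intro x w hw
  simpa only [Walk.edges_mapLe_eq_edges] using h x (w.mapLe hHG) (hw.mapLe hHG)

theorem SimpleGraph.Walk.edges_subset_restrictTo {A : Set V}
    (hA : ∀ x y, H.Adj x y → x ∈ A → y ∈ A) :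
    ∀ {x y : V} (w : H.Walk x y), x ∈ A → ∀ e ∈ w.edges, e ∈ (restrictTo H A).edgeSet
  | _, _, .nil, _ => by simp
  | _, _, .cons h w, hx => by
    have hy := hA _ _ h hx
    simp only [Walk.edges_cons, List.mem_cons, forall_eq_or_imp]
    exact ⟨⟨h, hx, hy⟩, w.edges_subset_restrictTo hA hy⟩

theorem NoNegCycle.of_restrictTo {A : Set V} (hA : ∀ x y, H.Adj x y → (x ∈ A ↔ y ∈ A))
    (h₁ : NoNegCycle (restrictTo H A) σ) (h₂ : NoNegCycle (restrictTo H Aᶜ) σ) :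
    NoNegCycle H σ := by
  intro x w hw
  by_cases hx : x ∈ A
  · have hw₁ := w.edges_subset_restrictTo (fun a b hab => (hA a b hab).mp) hx
    simpa only [Walk.edges_transfer] using h₁ x (w.transfer _ hw₁) (hw.transfer hw₁)
  · have hw₂ := w.edges_subset_restrictTo (A := Aᶜ) (fun a b hab => (hA a b hab).not.mp) hx
    simpa only [Walk.edges_transfer] using h₂ x (w.transfer _ hw₂) (hw.transfer hw₂)

theorem NoNegCycle.of_deleteEdges_bridge {e : Sym2 V} (hHG : H ≤ G) (he : G.IsBridge e)
    (h : NoNegCycle (H.deleteEdges ({e} : Set (Sym2 V))) σ) : NoNegCycle H σ := by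
  intro x w hw
  have hew : e ∉ w.edges := by
    simpa only [Walk.edges_mapLe_eq_edges] using he.notMem_edges_of_isCycle (hw.mapLe hHG)
  simpa only [Walk.edges_transfer] using h x (w.toDeleteEdge e hew) (hw.transfer _)

theorem noNegCycle_iff_restrictTo_of_isBridge (hHG : H ≤ G) {A : Set V} {u v : V}
    (hbridge : G.IsBridge s(u, v))
    (hsep : ∀ x y, G.Adj x y → s(x, y) = s(u, v) ∨ (x ∈ A ∧ y ∈ A) ∨ (x ∉ A ∧ y ∉ A)) :
    NoNegCycle H σ ↔ NoNegCycle (restrictTo H A) σ ∧ NoNegCycle (restrictTo H Aᶜ) σ := by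
  refine ⟨fun h => ⟨h.anti (restrictTo_le H A), h.anti (restrictTo_le H Aᶜ)⟩,
    fun ⟨h₁, h₂⟩ => .of_deleteEdges_bridge hHG hbridge (.of_restrictTo ?_
      (h₁.anti (restrictTo_mono (deleteEdges_le _) A))
      (h₂.anti (restrictTo_mono (deleteEdges_le _) Aᶜ)))⟩
  intro x y hxy
  rw [deleteEdges_adj, Set.mem_singleton_iff] at hxy
  rcases hsep x y (hHG hxy.1) with h | h | h
  · exact absurd h hxy.2
  · tauto
  · tauto

end Balance

open scoped Classical

section EdgeFinset

variable [Fintype V] {G : SimpleGraph V}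

theorem mem_edgeFS {e : Sym2 V} : e ∈ edgeFS G ↔ e ∈ G.edgeSet := by
  simp [edgeFS]

theorem disjoint_edgeFS_restrictTo_compl (A : Set V) :
    Disjoint (edgeFS (restrictTo G A)) (edgeFS (restrictTo G Aᶜ)) := by
  rw [Finset.disjoint_left]
  refine Sym2.ind fun x y h₁ h₂ => ?_
  rw [mem_edgeFS, mem_edgeSet, restrictTo_adj] at h₁ h₂
  exact h₂.2.1 h₁.2.1

theorem edgeFS_eq_union_of_separates {A : Set V} {u v : V} (huv : G.Adj u v)
    (hsep : ∀ x y, G.Adj x y → s(x, y) = s(u, v) ∨ (x ∈ A ∧ y ∈ A) ∨ (x ∉ A ∧ y ∉ A)) :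
    edgeFS G = edgeFS (restrictTo G A) ∪ (edgeFS (restrictTo G Aᶜ) ∪ {s(u, v)}) := by
  refine Finset.ext (Sym2.ind fun x y => ?_)
  simp only [Finset.mem_union, Finset.mem_singleton, mem_edgeFS, mem_edgeSet, restrictTo_adj,
    Set.mem_compl_iff]
  constructor
  · intro h
    rcases hsep x y h with h' | h' | h' <;> tauto
  · rintro (⟨h, -⟩ | ⟨h, -⟩ | h)
    · exact h
    · exact h
    · rcases Sym2.eq_iff.mp h with ⟨rfl, rfl⟩ | ⟨rfl, rfl⟩
      · exact huv
      · exact huv.symm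

theorem restrictTo_fromEdgeSet {S : Finset (Sym2 V)} (hS : S ⊆ edgeFS G) (A : Set V) :
    restrictTo (fromEdgeSet ↑S) A = fromEdgeSet ↑(S ∩ edgeFS (restrictTo G A)) := by
  ext x y
  have hSG : s(x, y) ∈ S → G.Adj x y := fun h => mem_edgeFS.mp (hS h)
  simp only [restrictTo_adj, fromEdgeSet_adj, Finset.coe_inter, Set.mem_inter_iff,
    Finset.mem_coe, mem_edgeFS, mem_edgeSet]
  tauto

end EdgeFinset

section BalanceRate

variable [Fintype V]

noncomputable def balancedIndicator (σ : Sym2 V → Bool) (S : Finset (Sym2 V)) : ℝ :=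
  if NoNegCycle (fromEdgeSet (↑S : Set (Sym2 V))) σ then 1 else 0

theorem Rbal_eq_subsetExpect (G : SimpleGraph V) (σ : Sym2 V → Bool) (p : Sym2 V → ℝ) :
    Rbal G σ p = subsetExpect p (edgeFS G) (balancedIndicator σ) :=
  rfl

theorem balancedIndicator_eq_mul_of_isBridge {G : SimpleGraph V} {σ : Sym2 V → Bool}
    {A : Set V} {u v : V} (hbridge : G.IsBridge s(u, v))
    (hsep : ∀ x y, G.Adj x y → s(x, y) = s(u, v) ∨ (x ∈ A ∧ y ∈ A) ∨ (x ∉ A ∧ y ∉ A))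
    {S : Finset (Sym2 V)} (hS : S ⊆ edgeFS G) :
    balancedIndicator σ S = balancedIndicator σ (S ∩ edgeFS (restrictTo G A)) *
      balancedIndicator σ (S ∩ edgeFS (restrictTo G Aᶜ)) := by
  have hSG : fromEdgeSet (↑S : Set (Sym2 V)) ≤ G := fun x y h =>
    mem_edgeFS.mp (hS h.1)
  unfold balancedIndicator
  simp only [ite_zero_mul_ite_zero, mul_one, ← restrictTo_fromEdgeSet hS,
    noNegCycle_iff_restrictTo_of_isBridge hSG hbridge hsep]

end BalanceRate

theorem stmt2_general [Fintype V] (G : SimpleGraph V) (σ : Sym2 V → Bool) (p : Sym2 V → ℝ)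
    (u v : V) (huv : G.Adj u v) (hbridge : G.IsBridge s(u, v))
    (A : Set V) (hu : u ∈ A) (hv : v ∉ A)
    (hsep : ∀ x y, G.Adj x y →
      s(x, y) = s(u, v) ∨ (x ∈ A ∧ y ∈ A) ∨ (x ∉ A ∧ y ∉ A)) :
    Rbal G σ p = Rbal (restrictTo G A) σ p * Rbal (restrictTo G Aᶜ) σ p := by
  set E₁ := edgeFS (restrictTo G A)
  set E₂ := edgeFS (restrictTo G Aᶜ)
  have hE : edgeFS G = E₁ ∪ (E₂ ∪ {s(u, v)}) := edgeFS_eq_union_of_separates huv hsep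
  have hbE₁ : s(u, v) ∉ E₁ := fun h => hv (mem_edgeFS.mp h).2.2
  have hbE₂ : s(u, v) ∉ E₂ := fun h => (mem_edgeFS.mp h).2.1 hu
  have hdisj₁ : Disjoint E₁ (E₂ ∪ {s(u, v)}) :=
    Finset.disjoint_union_right.mpr
      ⟨disjoint_edgeFS_restrictTo_compl A, Finset.disjoint_singleton_right.mpr hbE₁⟩
  have hdisj₂ : Disjoint E₂ {s(u, v)} := Finset.disjoint_singleton_right.mpr hbE₂
  calc Rbal G σ p
      = subsetExpect p (E₁ ∪ (E₂ ∪ {s(u, v)})) fun S =>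
          balancedIndicator σ (S ∩ E₁) *
            (balancedIndicator σ (S ∩ (E₂ ∪ {s(u, v)}) ∩ E₂) * 1) := by
        rw [Rbal_eq_subsetExpect, hE]
        refine Finset.sum_congr rfl fun S hS => congrArg _ ?_
        dsimp only
        rw [Finset.inter_assoc, Finset.union_inter_cancel_left, mul_one,
          balancedIndicator_eq_mul_of_isBridge hbridge hsep (hE ▸ Finset.mem_powerset.mp hS)]
    -- the bridge's own presence is irrelevant, so it contributes a factor `1`
    _ = subsetExpect p E₁ (balancedIndicator σ) *
          (subsetExpect p E₂ (balancedIndicator σ) * subsetExpect p {s(u, v)} fun _ => 1) := by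
        rw [← subsetExpect_union_mul hdisj₂, ← subsetExpect_union_mul hdisj₁]
    _ = Rbal (restrictTo G A) σ p * Rbal (restrictTo G Aᶜ) σ p := by
        rw [subsetExpect_one, mul_one]
        rfl

/-- Bridge decomposition: if `s(u,v)` is a bridge of the uncertain signed graph `G`
separating it into the part `A` (containing `u`) and its complement (containing `v`),
then the balance rate of `G` is the product of the balance rates of the two parts. -/
theorem stmt2 [Fintype V] (G : SimpleGraph V) (σ : Sym2 V → Bool) (p : Sym2 V → ℝ)
    (hp0 : ∀ e, 0 ≤ p e) (hp1 : ∀ e, p e ≤ 1)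
    (u v : V) (huv : G.Adj u v) (hbridge : G.IsBridge s(u, v))
    (A : Set V) (hu : u ∈ A) (hv : v ∉ A)
    (hsep : ∀ x y, G.Adj x y →
      s(x, y) = s(u, v) ∨ (x ∈ A ∧ y ∈ A) ∨ (x ∉ A ∧ y ∉ A)) :
    Rbal G σ p = Rbal (restrictTo G A) σ p * Rbal (restrictTo G Aᶜ) σ p :=
  stmt2_general G σ p u v huv hbridge A hu hv hsep
end

section
/- If X̄ is the mean of N i.i.d. copies of a random variable X with mean μ and variance b, then E[X̄²] = μ² + b/N. Consequently, for independent coordinates, the variance of the product-of-means estimator equals ∏_j(a_j + b_j/N) − ∏_j a_j = ∑_{∅≠S} N^{−|S|}(∏_{j∈S} b_j)(∏_{j∉S} a_j), where a_j = μ_j². -/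
/-!
`E[X̄²] = Var X̄ + (E X̄)²`, and `Var X̄ = b / N` because variance is additive over the
independent coordinates. For the product `P = ∏ⱼ X̄ⱼ`, Fubini gives `E[P²] = ∏ⱼ E[X̄ⱼ²]` and
`E[P] = ∏ⱼ μⱼ`, hence `Var P = ∏ⱼ (aⱼ + bⱼ/N) − ∏ⱼ aⱼ`; expanding the first product over the set
`S` of factors contributing `bⱼ/N`, the term `S = ∅` cancels `∏ⱼ aⱼ`.
-/

open MeasureTheory ProbabilityTheory Finset

theorem Finset.prod_add_sub_prod_eq_sum_powerset_erase_empty {ι R : Type*} [Fintype ι]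
    [DecidableEq ι] [CommRing R] (a b : ι → R) :
    ∏ i, (a i + b i) - ∏ i, a i
      = ∑ t ∈ (univ : Finset ι).powerset.erase ∅, (∏ i ∈ t, b i) * ∏ i ∈ tᶜ, a i := by
  simp_rw [add_comm (a _), Fintype.prod_add, ← powerset_univ,
    ← add_sum_erase _ _ (empty_mem_powerset univ)]
  simp

section ProductOfIndependent

variable {ι : Type*} [Fintype ι] {Ω : ι → Type*} [∀ i, MeasurableSpace (Ω i)]
  {μ : ∀ i, Measure (Ω i)} [∀ i, IsProbabilityMeasure (μ i)] {X : ∀ i, Ω i → ℝ}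

lemma memLp_two_fun_prod_pi (hX : ∀ i, MemLp (X i) 2 (μ i)) :
    MemLp (fun ω => ∏ i, X i (ω i)) 2 (Measure.pi μ) := by
  refine (memLp_two_iff_integrable_sq ?_).2 ?_
  · exact Finset.aestronglyMeasurable_fun_prod _ fun i _ =>
      (hX i).aestronglyMeasurable.comp_quasiMeasurePreserving
        (measurePreserving_eval μ i).quasiMeasurePreserving
  · simp_rw [← Finset.prod_pow]
    exact Integrable.fintype_prod_dep fun i => (hX i).integrable_sq

lemma variance_fun_prod_pi (hX : ∀ i, MemLp (X i) 2 (μ i)) :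
    Var[fun ω => ∏ i, X i (ω i); Measure.pi μ]
      = ∏ i, ∫ x, X i x ^ 2 ∂μ i - ∏ i, (∫ x, X i x ∂μ i) ^ 2 := by
  rw [variance_eq_sub (memLp_two_fun_prod_pi hX)]
  simp_rw [Pi.pow_apply, ← Finset.prod_pow]
  rw [integral_fintype_prod_eq_prod (fun i x => X i x ^ 2), integral_fintype_prod_eq_prod X,
    Finset.prod_pow]

end ProductOfIndependent

noncomputable def sampleMean (N : ℕ) (y : Fin N → ℝ) : ℝ := (∑ k, y k) / N

section SampleMean

variable {N : ℕ} {ν : Measure ℝ} [IsProbabilityMeasure ν]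

lemma memLp_sampleMean (h : MemLp id 2 ν) :
    MemLp (sampleMean N) 2 (Measure.pi fun _ => ν) := by
  have hsum := memLp_finsetSum univ fun k _ =>
    h.comp_measurePreserving (measurePreserving_eval (fun _ : Fin N => ν) k)
  convert hsum.mul_const (N : ℝ)⁻¹ using 1
  ext y
  simp [sampleMean, div_eq_mul_inv]

lemma integral_sampleMean (hN : N ≠ 0) (h : Integrable id ν) :
    ∫ y, sampleMean N y ∂(Measure.pi fun _ => ν) = ∫ x, x ∂ν := by
  unfold sampleMean
  rw [integral_div, integral_finsetSum _ fun k _ => integrable_eval (i := k) h]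
  simp_rw [integral_eval, sum_const, card_univ, Fintype.card_fin, nsmul_eq_mul]
  field_simp

lemma variance_sampleMean (h : MemLp id 2 ν) :
    Var[sampleMean N; Measure.pi fun _ => ν] = Var[id; ν] / N := by
  have hsum := variance_sum_pi (μ := fun _ : Fin N => ν) (X := fun _ => id) fun _ => h
  have hmean : sampleMean N = fun y => (N : ℝ)⁻¹ * (∑ k, fun y : Fin N → ℝ => id (y k)) y := by
    ext y; simp [sampleMean, inv_mul_eq_div]
  rw [hmean, variance_const_mul, hsum]
  rcases eq_or_ne N 0 with rfl | hN
  · simp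
  · simp only [sum_const, card_univ, Fintype.card_fin, nsmul_eq_mul]
    field_simp

lemma integral_sampleMean_sq (hN : N ≠ 0) (h : MemLp id 2 ν) :
    ∫ y, sampleMean N y ^ 2 ∂(Measure.pi fun _ => ν) = (∫ x, x ∂ν) ^ 2 + Var[id; ν] / N := by
  have hvar := variance_eq_sub (memLp_sampleMean (N := N) h)
  rw [variance_sampleMean h, integral_sampleMean hN (h.integrable one_le_two)] at hvar
  simp only [Pi.pow_apply] at hvar
  linarith

end SampleMean

/-- If `X̄` is the mean of `N` i.i.d. copies of a random variable with law `ν0`,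
mean `μ` and variance `b`, then `E[X̄²] = μ² + b/N`; consequently, for independent
coordinates with laws `ν j`, the variance of the product-of-means estimator equals
`∏ⱼ(aⱼ + bⱼ/N) − ∏ⱼ aⱼ = ∑_{∅≠S} N^{-|S|} (∏_{j∈S} bⱼ)(∏_{j∉S} aⱼ)` with `aⱼ = μⱼ²`. -/
theorem stmt7 (N : ℕ) (hN : 1 ≤ N)
    (ν0 : Measure ℝ) [IsProbabilityMeasure ν0] (h0 : MemLp id 2 ν0)
    (m : ℕ) (ν : Fin m → Measure ℝ) [∀ j, IsProbabilityMeasure (ν j)]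
    (h : ∀ j, MemLp id 2 (ν j)) :
    (∫ ω : Fin N → ℝ, ((∑ k, ω k) / N) ^ 2 ∂(Measure.pi fun _ : Fin N => ν0)
        = (∫ x, x ∂ν0) ^ 2 + variance id ν0 / N) ∧
    variance (fun ω : Fin m → Fin N → ℝ => ∏ j, (∑ k, ω j k) / N)
        (Measure.pi fun j => Measure.pi fun _ : Fin N => ν j)
      = ∏ j, ((∫ x, x ∂ν j) ^ 2 + variance id (ν j) / N)
        - ∏ j, (∫ x, x ∂ν j) ^ 2 ∧
    variance (fun ω : Fin m → Fin N → ℝ => ∏ j, (∑ k, ω j k) / N)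
        (Measure.pi fun j => Measure.pi fun _ : Fin N => ν j)
      = ∑ S ∈ (Finset.univ : Finset (Fin m)).powerset.erase ∅,
          ((N : ℝ) ^ S.card)⁻¹ *
            ((∏ j ∈ S, variance id (ν j)) * ∏ j ∈ Sᶜ, (∫ x, x ∂ν j) ^ 2) := by
  have hN0 : N ≠ 0 := Nat.one_le_iff_ne_zero.mp hN
  have hvar : Var[fun ω : Fin m → Fin N → ℝ => ∏ j, sampleMean N (ω j);
        Measure.pi fun j => Measure.pi fun _ : Fin N => ν j]
      = ∏ j, ((∫ x, x ∂ν j) ^ 2 + Var[id; ν j] / N) - ∏ j, (∫ x, x ∂ν j) ^ 2 := by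
    rw [variance_fun_prod_pi fun j => memLp_sampleMean (h j)]
    simp_rw [integral_sampleMean_sq hN0 (h _),
      integral_sampleMean hN0 ((h _).integrable one_le_two)]
  refine ⟨integral_sampleMean_sq hN0 h0, hvar, hvar.trans ?_⟩
  rw [prod_add_sub_prod_eq_sum_powerset_erase_empty]
  refine sum_congr rfl fun S _ => ?_
  rw [prod_div_distrib, prod_const]
  ring
end

section
/- Let G1 = (V, E1, S1, P1) and G2 = (V, E2, S2, P2) be uncertain signed graphs with E1 ⊆ E2 and with S2, P2 restricting to S1, P1 on E1. Then R_bal(G1) ≥ R_bal(G2). -/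
open SimpleGraph Finset

variable {V : Type*}

/-!
Intersecting a random edge set of `G2` with the edges of `G1` yields a random edge set of
`G1` with exactly its law, because edges are independent; and deleting edges cannot create a
negative cycle. So under this coupling, whenever the realization of `G2` is balanced, so is
that of `G1`.
-/

section BernoulliSubset

variable {α : Type*} [DecidableEq α]

/-- The probability that the random subset of `s`, containing each `e` independently with
probability `p e`, is `S`. -/
def bernoulliWeight (s : Finset α) (p : α → ℝ) (S : Finset α) : ℝ :=
  (∏ e ∈ S, p e) * ∏ e ∈ s \ S, (1 - p e)

lemma bernoulliWeight_nonneg {s S : Finset α} {p : α → ℝ} (hp0 : ∀ e ∈ s, 0 ≤ p e)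
    (hp1 : ∀ e ∈ s, p e ≤ 1) (hS : S ⊆ s) : 0 ≤ bernoulliWeight s p S :=
  mul_nonneg (prod_nonneg fun e he => hp0 e (hS he))
    (prod_nonneg fun e he => sub_nonneg.2 (hp1 e (mem_sdiff.1 he).1))

lemma bernoulliWeight_insert_of_subset {s S : Finset α} {a : α} (p : α → ℝ) (ha : a ∉ s)
    (hS : S ⊆ s) : bernoulliWeight (insert a s) p S = (1 - p a) * bernoulliWeight s p S := by
  rw [bernoulliWeight, bernoulliWeight, insert_sdiff_of_notMem _ fun h => ha (hS h),
    prod_insert fun h => ha (mem_sdiff.1 h).1]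
  ring

lemma bernoulliWeight_insert_insert {s S : Finset α} {a : α} (p : α → ℝ) (ha : a ∉ s)
    (hS : S ⊆ s) : bernoulliWeight (insert a s) p (insert a S) = p a * bernoulliWeight s p S := by
  rw [bernoulliWeight, bernoulliWeight, insert_sdiff_insert, sdiff_insert_of_notMem ha,
    prod_insert fun h => ha (hS h)]
  ring

/-- Marginalising the random subset of `s ∪ u` onto `s` gives the random subset of `s`. -/
lemma sum_bernoulliWeight_union_mul_inter {s u : Finset α} (hsu : Disjoint s u) (p : α → ℝ)
    (f : Finset α → ℝ) :
    ∑ S ∈ (s ∪ u).powerset, bernoulliWeight (s ∪ u) p S * f (S ∩ s) =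
      ∑ A ∈ s.powerset, bernoulliWeight s p A * f A := by
  induction u using Finset.induction_on with
  | empty =>
    rw [union_empty]
    exact sum_congr rfl fun A hA => by rw [inter_eq_left.2 (mem_powerset.1 hA)]
  | insert a u hau ih =>
    have has : a ∉ s := disjoint_right.1 hsu (mem_insert_self a u)
    have ha : a ∉ s ∪ u := by simp [has, hau]
    rw [union_insert, sum_powerset_insert ha, ← ih (hsu.mono_right (subset_insert a u)),
      ← sum_add_distrib]
    refine sum_congr rfl fun S hS => ?_
    have hS := mem_powerset.1 hS
    rw [bernoulliWeight_insert_of_subset p ha hS, bernoulliWeight_insert_insert p ha hS,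
      insert_inter_of_notMem has]
    ring

lemma sum_bernoulliWeight_le_of_subset_of_antitone {s t : Finset α} (hst : s ⊆ t)
    {p : α → ℝ} (hp0 : ∀ e ∈ t, 0 ≤ p e) (hp1 : ∀ e ∈ t, p e ≤ 1) {f : Finset α → ℝ}
    (hf : Antitone f) :
    ∑ S ∈ t.powerset, bernoulliWeight t p S * f S ≤
      ∑ A ∈ s.powerset, bernoulliWeight s p A * f A := by
  calc ∑ S ∈ t.powerset, bernoulliWeight t p S * f S
      ≤ ∑ S ∈ t.powerset, bernoulliWeight t p S * f (S ∩ s) :=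
        sum_le_sum fun S hS => mul_le_mul_of_nonneg_left (hf inter_subset_left)
          (bernoulliWeight_nonneg hp0 hp1 (mem_powerset.1 hS))
    _ = ∑ A ∈ s.powerset, bernoulliWeight s p A * f A := by
        rw [← union_sdiff_of_subset hst]
        exact sum_bernoulliWeight_union_mul_inter disjoint_sdiff p f

end BernoulliSubset

lemma NoNegCycle.mono {G H : SimpleGraph V} (hGH : G ≤ H) {σ : Sym2 V → Bool}
    (hH : NoNegCycle H σ) : NoNegCycle G σ := by
  intro u w hc
  have hedges : ∀ e ∈ w.edges, e ∈ H.edgeSet := fun e he =>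
    edgeSet_mono hGH (w.edges_subset_edgeSet he)
  simpa only [Walk.edges_transfer] using hH u (w.transfer H hedges) (hc.transfer hedges)

open scoped Classical in
lemma antitone_balanced_indicator (σ : Sym2 V → Bool) :
    Antitone fun S : Finset (Sym2 V) =>
      (if NoNegCycle (fromEdgeSet (↑S : Set (Sym2 V))) σ then 1 else 0 : ℝ) := by
  intro S T hST
  by_cases hT : NoNegCycle (fromEdgeSet (↑T : Set (Sym2 V))) σ
  · have hS : NoNegCycle (fromEdgeSet (↑S : Set (Sym2 V))) σ :=
      hT.mono (fromEdgeSet_mono (coe_subset.2 hST))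
    simp only [hS, hT, if_true, le_refl]
  · simp only [hT, if_false]
    split_ifs <;> norm_num

lemma edgeFS_mono [Fintype V] {G H : SimpleGraph V} (hGH : G ≤ H) : edgeFS G ⊆ edgeFS H :=
  fun _ he => by
    simp only [edgeFS, mem_filter, mem_univ, true_and] at he ⊢
    exact edgeSet_mono hGH he

lemma Rbal_congr [Fintype V] (G : SimpleGraph V) (σ : Sym2 V → Bool) {p q : Sym2 V → ℝ}
    (hpq : ∀ e ∈ G.edgeSet, p e = q e) : Rbal G σ p = Rbal G σ q := by
  classical
  have hpq' : ∀ e ∈ edgeFS G, p e = q e := fun e he => hpq e (by simpa [edgeFS] using he)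
  refine sum_congr rfl fun S hS => ?_
  congr 2
  · exact prod_congr rfl fun e he => hpq' e (mem_powerset.1 hS he)
  · exact prod_congr rfl fun e he => by rw [hpq' e (mem_sdiff.1 he).1]

theorem stmt12_general [Fintype V] (G1 G2 : SimpleGraph V) (σ : Sym2 V → Bool)
    (p1 p2 : Sym2 V → ℝ) (hle : G1 ≤ G2)
    (hagree : ∀ e ∈ G1.edgeSet, p2 e = p1 e)
    (hp20 : ∀ e, 0 ≤ p2 e) (hp21 : ∀ e, p2 e ≤ 1) :
    Rbal G2 σ p2 ≤ Rbal G1 σ p1 := by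
  classical
  calc Rbal G2 σ p2 ≤ Rbal G1 σ p2 :=
        sum_bernoulliWeight_le_of_subset_of_antitone (edgeFS_mono hle) (fun e _ => hp20 e)
          (fun e _ => hp21 e) (antitone_balanced_indicator σ)
    _ = Rbal G1 σ p1 := Rbal_congr G1 σ hagree

/-- If `G1 ⊆ G2` (same vertex set, `E1 ⊆ E2`), the signs agree, and the probabilities
agree on the edges of `G1`, then `R_bal(G1) ≥ R_bal(G2)`. -/
theorem stmt12 [Fintype V] (G1 G2 : SimpleGraph V) (σ : Sym2 V → Bool)
    (p1 p2 : Sym2 V → ℝ) (hle : G1 ≤ G2)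
    (hagree : ∀ e ∈ G1.edgeSet, p2 e = p1 e)
    (hp10 : ∀ e, 0 ≤ p1 e) (hp11 : ∀ e, p1 e ≤ 1)
    (hp20 : ∀ e, 0 ≤ p2 e) (hp21 : ∀ e, p2 e ≤ 1) :
    Rbal G2 σ p2 ≤ Rbal G1 σ p1 :=
  stmt12_general G1 G2 σ p1 p2 hle hagree hp20 hp21
end
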